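/- arXiv:1201.6226 — 2 statements merged into one kernel-verified Lean document; each statement's English description precedes it below -/
import Mathlib

section
/- Let f : [a,b] → ℝ be continuous and integrable on [a,b] with 0 ≤ a < b, let l ≥ 1, and suppose |f|^l is (α,m)-convex for some fixed (α,m) ∈ (0,1]². Then for any fixed p, q > 0, ∫_a^b (x-a)^p (b-x)^q f(x) dx ≤ (b-a)^{p+q+1} [β(p+1, q+1)]^{(l-1)/l} [β(q+1, p+α+1)|f(b)|^l + m(β(q+1, p+1) − β(q+1, p+α+1))|f(a/m)|^l]^{1/l}. -/
open Real Set MeasureTheory intervalIntegral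

noncomputable def beta (x y : ℝ) : ℝ := ∫ t in (0:ℝ)..1, t ^ (x-1) * (1-t) ^ (y-1)

def AMConvexOn (s : Set ℝ) (α m : ℝ) (g : ℝ → ℝ) : Prop :=
  ∀ x ∈ s, ∀ y ∈ s, ∀ t ∈ Set.Icc (0:ℝ) 1, g (t*x + m*(1-t)*y) ≤ t ^ α * g x + m*(1 - t ^ α) * g y

/-!
Substituting `x = a + (b - a) t` turns the weight `(x-a)^p (b-x)^q` into `(b-a)^(p+q) t^p (1-t)^q`.
Bound `f` by `|f|` and apply Hölder's inequality with the weight `t^p (1-t)^q`, whose total mass is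
`β(p+1, q+1)`.  Since `(b-a) t + a = t b + m (1-t) (a/m)`, the `(α,m)`-convexity of `|f|^l` bounds
`|f((b-a) t + a)|^l` by `t^α |f b|^l + m (1 - t^α) |f (a/m)|^l`, and integrating this against the
weight gives the Beta-function combination on the right.
-/

lemma beta_comm (x y : ℝ) : beta x y = beta y x := by
  have h := integral_comp_sub_left (fun t : ℝ => t ^ (x-1) * (1-t) ^ (y-1)) (1 : ℝ)
    (a := 0) (b := 1)
  simp only [sub_zero, sub_self, sub_sub_cancel] at h
  rw [beta, ← h, beta]
  exact integral_congr fun t _ => mul_comm _ _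

lemma beta_add_one_add_one (p q : ℝ) :
    beta (p+1) (q+1) = ∫ t in (0:ℝ)..1, t ^ p * (1-t) ^ q := by
  simp only [beta, add_sub_cancel_right]

lemma continuous_rpow_mul_one_sub_rpow {p q : ℝ} (hp : 0 ≤ p) (hq : 0 ≤ q) :
    Continuous fun t : ℝ => t ^ p * (1-t) ^ q :=
  (continuous_rpow_const hp).mul
    ((continuous_rpow_const hq).comp (continuous_const.sub continuous_id))

lemma rpow_mul_one_sub_rpow_nonneg {t : ℝ} (ht : t ∈ Icc (0:ℝ) 1) (p q : ℝ) :
    0 ≤ t ^ p * (1-t) ^ q :=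
  mul_nonneg (rpow_nonneg ht.1 p) (rpow_nonneg (sub_nonneg.2 ht.2) q)

lemma beta_add_one_add_one_nonneg (p q : ℝ) : 0 ≤ beta (p+1) (q+1) := by
  rw [beta_add_one_add_one]
  exact intervalIntegral.integral_nonneg zero_le_one fun t ht =>
    rpow_mul_one_sub_rpow_nonneg ht p q

lemma integral_sub_rpow_mul_rpow_sub_mul_eq {a b : ℝ} (hab : a < b) (p q : ℝ) (h : ℝ → ℝ) :
    ∫ x in a..b, (x-a) ^ p * (b-x) ^ q * h x
      = (b-a) ^ (p+q+1) * ∫ t in (0:ℝ)..1, t ^ p * (1-t) ^ q * h ((b-a) * t + a) := by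
  have hba : 0 < b - a := sub_pos.2 hab
  have hsub := smul_integral_comp_mul_add (fun x => (x-a) ^ p * (b-x) ^ q * h x) (b-a) a
    (a := 0) (b := 1)
  simp only [mul_zero, zero_add, mul_one, smul_eq_mul, sub_add_cancel] at hsub
  have hweight : ∀ t ∈ uIcc (0:ℝ) 1,
      ((b-a) * t + a - a) ^ p * (b - ((b-a) * t + a)) ^ q * h ((b-a) * t + a)
        = (b-a) ^ p * (b-a) ^ q * (t ^ p * (1-t) ^ q * h ((b-a) * t + a)) := by
    intro t ht
    rw [uIcc_of_le zero_le_one] at ht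
    rw [show (b-a) * t + a - a = (b-a) * t by ring,
      show b - ((b-a) * t + a) = (b-a) * (1-t) by ring, mul_rpow hba.le ht.1,
      mul_rpow hba.le (sub_nonneg.2 ht.2)]
    ring
  rw [← hsub, integral_congr hweight, intervalIntegral.integral_const_mul, rpow_add hba,
    rpow_add hba, rpow_one]
  ring

lemma integral_mul_le_rpow_integral_mul_rpow {a b l : ℝ} (hab : a ≤ b) (hl : 1 ≤ l) {w g : ℝ → ℝ}
    (hw : ContinuousOn w (Icc a b)) (hw0 : ∀ x ∈ Icc a b, 0 ≤ w x)
    (hg : ContinuousOn g (Icc a b)) (hg0 : ∀ x ∈ Icc a b, 0 ≤ g x) :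
    ∫ x in a..b, w x * g x
      ≤ (∫ x in a..b, w x) ^ ((l-1)/l) * (∫ x in a..b, w x * g x ^ l) ^ (1/l) := by
  rcases hl.eq_or_lt with rfl | hl
  · simp
  have hl0 : 0 < l := by linarith
  have hsum : (l-1)/l + 1/l = 1 := by field_simp; ring
  have hconj : (l / (l-1)).HolderConjugate l := by
    rw [Real.holderConjugate_iff]
    exact ⟨by rw [lt_div_iff₀ (by linarith)]; linarith, by field_simp; ring⟩
  set μ := volume.restrict (Ioc a b)
  have hsub : Ioc a b ⊆ Icc a b := Ioc_subset_Icc_self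
  have on_Ioc : ∀ {P : ℝ → Prop}, (∀ x ∈ Icc a b, P x) → ∀ᵐ x ∂μ, P x := fun h =>
    ae_restrict_of_forall_mem measurableSet_Ioc fun x hx => h x (hsub hx)
  have memLp : ∀ {φ : ℝ → ℝ} (r : ENNReal), ContinuousOn φ (Icc a b) → MemLp φ r μ := by
    intro φ r hφ
    obtain ⟨C, hC⟩ := isCompact_Icc.exists_bound_of_continuousOn hφ
    exact MemLp.of_bound ((hφ.mono hsub).aestronglyMeasurable measurableSet_Ioc) C (on_Ioc hC)
  have setIntegral_eq : ∀ {φ ψ : ℝ → ℝ}, (∀ x ∈ Icc a b, φ x = ψ x) →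
      ∫ x, φ x ∂μ = ∫ x in a..b, ψ x := fun h => by
    rw [integral_of_le hab]
    exact setIntegral_congr_fun measurableSet_Ioc fun x hx => h x (hsub hx)
  have holder := integral_mul_le_Lp_mul_Lq_of_nonneg hconj
    (on_Ioc fun x hx => rpow_nonneg (hw0 x hx) ((l-1)/l))
    (on_Ioc fun x hx => mul_nonneg (rpow_nonneg (hw0 x hx) (1/l)) (hg0 x hx))
    (memLp _ (hw.rpow_const fun _ _ => Or.inr (by positivity)))
    (memLp _ ((hw.rpow_const fun _ _ => Or.inr (by positivity)).mul hg))
  rwa [setIntegral_eq fun x hx => by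
      rw [← mul_assoc, ← rpow_add_of_nonneg (hw0 x hx) (by positivity) (by positivity), hsum,
        rpow_one],
    setIntegral_eq fun x hx => by
      rw [← rpow_mul (hw0 x hx), div_mul_div_cancel₀ hl0.ne', div_self (sub_pos.2 hl).ne',
        rpow_one],
    setIntegral_eq fun x hx => by
      rw [mul_rpow (rpow_nonneg (hw0 x hx) _) (hg0 x hx), ← rpow_mul (hw0 x hx),
        one_div_mul_cancel hl0.ne', rpow_one],
    one_div_div] at holder

lemma integral_rpow_mul_one_sub_rpow_mul_convexCombination {p q α : ℝ} (hp : 0 ≤ p) (hq : 0 ≤ q)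
    (hα : 0 ≤ α) (m B₁ B₂ : ℝ) :
    ∫ t in (0:ℝ)..1, t ^ p * (1-t) ^ q * (t ^ α * B₁ + m * (1 - t ^ α) * B₂)
      = beta (p+α+1) (q+1) * B₁ + m * (beta (p+1) (q+1) - beta (p+α+1) (q+1)) * B₂ := by
  have hpα : 0 ≤ p + α := add_nonneg hp hα
  have hsplit : ∀ t ∈ uIcc (0:ℝ) 1,
      t ^ p * (1-t) ^ q * (t ^ α * B₁ + m * (1 - t ^ α) * B₂)
        = B₁ * (t ^ (p+α) * (1-t) ^ q) + m * B₂ * (t ^ p * (1-t) ^ q)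
            - m * B₂ * (t ^ (p+α) * (1-t) ^ q) := by
    intro t ht
    rw [uIcc_of_le zero_le_one] at ht
    rw [rpow_add_of_nonneg ht.1 hp hα]
    ring
  have hint : ∀ {r : ℝ}, 0 ≤ r → IntervalIntegrable (fun t : ℝ => t ^ r * (1-t) ^ q) volume 0 1 :=
    fun hr => (continuous_rpow_mul_one_sub_rpow hr hq).intervalIntegrable 0 1
  rw [integral_congr hsplit, integral_sub (((hint hpα).const_mul _).add ((hint hp).const_mul _))
    ((hint hpα).const_mul _), integral_add ((hint hpα).const_mul _) ((hint hp).const_mul _),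
    intervalIntegral.integral_const_mul, intervalIntegral.integral_const_mul,
    intervalIntegral.integral_const_mul, beta_add_one_add_one (p+α), beta_add_one_add_one p]
  ring

lemma AMConvexOn.integral_rpow_mul_one_sub_rpow_mul_comp_le {s : Set ℝ} {α m a b p q : ℝ}
    {g : ℝ → ℝ} (hg : AMConvexOn s α m g) (hb : b ∈ s) (ha : a / m ∈ s) (hm : m ≠ 0)
    (hp : 0 ≤ p) (hq : 0 ≤ q) (hα : 0 ≤ α)
    (hint : IntervalIntegrable (fun t => t ^ p * (1-t) ^ q * g ((b-a) * t + a)) volume 0 1) :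
    ∫ t in (0:ℝ)..1, t ^ p * (1-t) ^ q * g ((b-a) * t + a)
      ≤ beta (p+α+1) (q+1) * g b + m * (beta (p+1) (q+1) - beta (p+α+1) (q+1)) * g (a / m) := by
  rw [← integral_rpow_mul_one_sub_rpow_mul_convexCombination hp hq hα]
  refine integral_mono_on zero_le_one hint ?_ fun t ht => ?_
  · have hcont : Continuous fun t : ℝ =>
        t ^ p * (1-t) ^ q * (t ^ α * g b + m * (1 - t ^ α) * g (a / m)) := by
      fun_prop (disch := assumption)
    exact hcont.intervalIntegrable 0 1
  · have hconv := hg b hb (a / m) ha t ht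
    rw [show t * b + m * (1-t) * (a / m) = (b-a) * t + a by field_simp; ring] at hconv
    exact mul_le_mul_of_nonneg_left hconv (rpow_mul_one_sub_rpow_nonneg ht p q)

theorem stmt10_general (a b p q : ℝ) (f : ℝ → ℝ)
    (ha : 0 ≤ a) (hab : a < b) (hp : 0 < p) (hq : 0 < q)
    (hcont : ContinuousOn f (Set.Icc a b))
    (l : ℝ) (hl : 1 ≤ l)
    (α m : ℝ) (hα : α ∈ Set.Ioc (0:ℝ) 1) (hm : m ∈ Set.Ioc (0:ℝ) 1)
    (hf : AMConvexOn (Set.Icc 0 (max b (a/m))) α m (fun x => |f x| ^ l)) :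
    ∫ x in a..b, (x-a)^p * (b-x)^q * f x
      ≤ (b-a)^(p+q+1) * (beta (p+1) (q+1))^((l-1)/l)
          * (beta (q+1) (p+α+1) * |f b| ^ l
              + m * (beta (q+1) (p+1) - beta (q+1) (p+α+1)) * |f (a/m)| ^ l) ^ (1/l) := by
  have hba : 0 < b - a := sub_pos.2 hab
  have hmaps : MapsTo (fun t : ℝ => (b-a) * t + a) (Icc 0 1) (Icc a b) := fun t ht =>
    ⟨by nlinarith [ht.1], by nlinarith [ht.2]⟩
  have hw := (continuous_rpow_mul_one_sub_rpow hp.le hq.le).continuousOn (s := Icc 0 1)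
  have hfφ : ContinuousOn (fun t => f ((b-a) * t + a)) (Icc 0 1) :=
    hcont.comp (by fun_prop) hmaps
  have hK := hf.integral_rpow_mul_one_sub_rpow_mul_comp_le (a := a)
    ⟨by linarith, le_max_left _ _⟩ ⟨div_nonneg ha hm.1.le, le_max_right _ _⟩
    hm.1.ne' hp.le hq.le hα.1.le
    ((hw.mul (hfφ.abs.rpow_const fun _ _ => Or.inr (by linarith))).intervalIntegrable_of_Icc
      zero_le_one)
  rw [integral_sub_rpow_mul_rpow_sub_mul_eq hab, beta_comm (q+1), beta_comm (q+1), mul_assoc]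
  refine mul_le_mul_of_nonneg_left ?_ (rpow_nonneg hba.le _)
  calc ∫ t in (0:ℝ)..1, t ^ p * (1-t) ^ q * f ((b-a) * t + a)
      ≤ ∫ t in (0:ℝ)..1, t ^ p * (1-t) ^ q * |f ((b-a) * t + a)| :=
        integral_mono_on zero_le_one ((hw.mul hfφ).intervalIntegrable_of_Icc zero_le_one)
          ((hw.mul hfφ.abs).intervalIntegrable_of_Icc zero_le_one) fun t ht =>
            mul_le_mul_of_nonneg_left (le_abs_self _) (rpow_mul_one_sub_rpow_nonneg ht p q)
    _ ≤ beta (p+1) (q+1) ^ ((l-1)/l)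
          * (∫ t in (0:ℝ)..1, t ^ p * (1-t) ^ q * |f ((b-a) * t + a)| ^ l) ^ (1/l) := by
        rw [beta_add_one_add_one]
        exact integral_mul_le_rpow_integral_mul_rpow zero_le_one hl hw
          (fun t ht => rpow_mul_one_sub_rpow_nonneg ht p q) hfφ.abs fun _ _ => abs_nonneg _
    _ ≤ _ := by
        have hK0 : 0 ≤ ∫ t in (0:ℝ)..1, t ^ p * (1-t) ^ q * |f ((b-a) * t + a)| ^ l :=
          intervalIntegral.integral_nonneg zero_le_one fun t ht =>
            mul_nonneg (rpow_mul_one_sub_rpow_nonneg ht p q) (rpow_nonneg (abs_nonneg _) l)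
        exact mul_le_mul_of_nonneg_left (rpow_le_rpow hK0 hK (by positivity))
          (rpow_nonneg (beta_add_one_add_one_nonneg p q) _)

theorem stmt10 (a b p q : ℝ) (f : ℝ → ℝ)
    (ha : 0 ≤ a) (hab : a < b) (hp : 0 < p) (hq : 0 < q)
    (hcont : ContinuousOn f (Set.Icc a b))
    (hint : IntervalIntegrable f volume a b)
    (l : ℝ) (hl : 1 ≤ l)
    (α m : ℝ) (hα : α ∈ Set.Ioc (0:ℝ) 1) (hm : m ∈ Set.Ioc (0:ℝ) 1)
    (hf : AMConvexOn (Set.Icc 0 (max b (a/m))) α m (fun x => |f x| ^ l)) :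
    ∫ x in a..b, (x-a)^p * (b-x)^q * f x
      ≤ (b-a)^(p+q+1) * (beta (p+1) (q+1))^((l-1)/l)
          * (beta (q+1) (p+α+1) * |f b| ^ l
              + m * (beta (q+1) (p+1) - beta (q+1) (p+α+1)) * |f (a/m)| ^ l) ^ (1/l) :=
  stmt10_general a b p q f ha hab hp hq hcont l hl α m hα hm hf
end

section
/- Let f : I ⊆ ℝ → ℝ be differentiable on I, a, b ∈ I with a < b, let p > 1, and suppose |f'|^{p/(p-1)} is quasi-convex on [a,b]. Then |(f(a)+f(b))/2 − (1/(b-a))∫_a^b f(u) du| ≤ (b-a)/(2(p+1)^{1/p}) · (max{|f'(a)|^{p/(p-1)}, |f'(b)|^{p/(p-1)}})^{(p-1)/p}. -/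
open Real Set MeasureTheory intervalIntegral

def QuasiConvexOn' (s : Set ℝ) (g : ℝ → ℝ) : Prop :=
  ∀ x ∈ s, ∀ y ∈ s, ∀ lam ∈ Set.Icc (0:ℝ) 1, g (lam*x + (1-lam)*y) ≤ max (g x) (g y)

/-!
Quasi-convexity of `|f'| ^ (p/(p-1))` bounds `|f'|` on `[a, b]` by
`C = (max (|f' a| ^ (p/(p-1))) (|f' b| ^ (p/(p-1)))) ^ ((p-1)/p)`. Integration by parts writes the
trapezoid error as `(1/(b-a)) ∫ (x - (a+b)/2) f' x`, which is therefore at most `(b-a) C / 4`.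
Bernoulli's inequality `p + 1 ≤ 2 ^ p` gives `(p+1)^(1/p) ≤ 2`, so `(b-a)/4 ≤ (b-a)/(2 (p+1)^(1/p))`.
-/

theorem QuasiConvexOn'.le_max_of_mem_Icc {g : ℝ → ℝ} {a b u : ℝ}
    (hg : QuasiConvexOn' (Icc a b) g) (hu : u ∈ Icc a b) : g u ≤ max (g a) (g b) := by
  have hab : a ≤ b := hu.1.trans hu.2
  rw [← segment_eq_Icc hab] at hu
  obtain ⟨s, t, hs, ht, hst, rfl⟩ := hu
  obtain rfl : t = 1 - s := by linarith
  exact hg a (left_mem_Icc.2 hab) b (right_mem_Icc.2 hab) s ⟨hs, by linarith⟩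

theorem rpow_div_sub_one_rpow_sub_one_div {p : ℝ} (hp : 1 < p) {x : ℝ} (hx : 0 ≤ x) :
    (x ^ (p / (p - 1))) ^ ((p - 1) / p) = x := by
  rw [← inv_div p (p - 1), rpow_rpow_inv hx (div_pos (by linarith) (by linarith)).ne']

theorem rpow_one_div_add_one_le_two {p : ℝ} (hp : 1 ≤ p) : (p + 1) ^ (1 / p) ≤ 2 := by
  have hp0 : 0 < p := by linarith
  have bernoulli : p + 1 ≤ (2 : ℝ) ^ p := by
    have := one_add_mul_self_le_rpow_one_add (by norm_num : (-1 : ℝ) ≤ 1) hp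
    norm_num at this
    linarith
  calc (p + 1) ^ (1 / p) ≤ ((2 : ℝ) ^ p) ^ (1 / p) := by gcongr
    _ = 2 := by rw [← rpow_mul (by norm_num), mul_one_div_cancel hp0.ne', rpow_one]

theorem integral_abs_sub_midpoint {a b : ℝ} (hab : a ≤ b) :
    ∫ x in a..b, |x - (a + b) / 2| = (b - a) ^ 2 / 4 := by
  set m := (a + b) / 2 with hm
  have ham : a ≤ m := by linarith
  have hmb : m ≤ b := by linarith
  have hcont : Continuous fun x : ℝ => |x - m| := by fun_prop
  have half : ∀ c, ∫ x in uIoc m c, |x - m| = (c - m) ^ 2 / 2 := fun c => by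
    simpa [one_add_one_eq_two] using integral_pow_abs_sub_uIoc (a := m) (b := c) (n := 1)
  rw [← integral_add_adjacent_intervals (b := m) (hcont.intervalIntegrable _ _)
      (hcont.intervalIntegrable _ _), integral_of_le ham, integral_of_le hmb,
    ← uIoc_of_le ham, ← uIoc_of_le hmb, uIoc_comm, half, half, hm]
  ring

theorem intervalIntegrable_of_hasDerivAt_of_abs_le {f f' : ℝ → ℝ} {a b C : ℝ} (hab : a ≤ b)
    (hderiv : ∀ x ∈ Icc a b, HasDerivAt f (f' x) x) (hbound : ∀ x ∈ Icc a b, |f' x| ≤ C) :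
    IntervalIntegrable f' volume a b := by
  rw [intervalIntegrable_iff_integrableOn_Ioc_of_le hab]
  have hmeas : AEStronglyMeasurable f' (volume.restrict (Ioc a b)) := by
    refine (measurable_deriv f).aestronglyMeasurable.restrict.congr ?_
    filter_upwards [ae_restrict_mem measurableSet_Ioc] with x hx
    exact (hderiv x (Ioc_subset_Icc_self hx)).deriv
  refine (integrable_const C).mono' hmeas ?_
  filter_upwards [ae_restrict_mem measurableSet_Ioc] with x hx
  exact hbound x (Ioc_subset_Icc_self hx)

theorem trapezoid_error_eq_integral_mul_deriv {f f' : ℝ → ℝ} {a b : ℝ} (hab : a < b)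
    (hderiv : ∀ x ∈ Icc a b, HasDerivAt f (f' x) x) (hint : IntervalIntegrable f' volume a b) :
    (f a + f b) / 2 - 1 / (b - a) * ∫ u in a..b, f u
      = 1 / (b - a) * ∫ x in a..b, (x - (a + b) / 2) * f' x := by
  have hibp := integral_mul_deriv_eq_deriv_mul (fun x _ => (hasDerivAt_id x).sub_const ((a + b) / 2))
    (fun x hx => hderiv x (by rwa [uIcc_of_le hab.le] at hx)) intervalIntegrable_const hint
  simp only [id, one_mul] at hibp
  rw [hibp]
  field_simp [(sub_pos.2 hab).ne']
  ring

theorem abs_trapezoid_error_le {f f' : ℝ → ℝ} {a b C : ℝ} (hab : a < b)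
    (hderiv : ∀ x ∈ Icc a b, HasDerivAt f (f' x) x) (hbound : ∀ x ∈ Icc a b, |f' x| ≤ C) :
    |(f a + f b) / 2 - 1 / (b - a) * ∫ u in a..b, f u| ≤ (b - a) / 4 * C := by
  have hba : 0 < b - a := sub_pos.2 hab
  have hint := intervalIntegrable_of_hasDerivAt_of_abs_le hab.le hderiv hbound
  have hkernel : Continuous fun x : ℝ => x - (a + b) / 2 := by fun_prop
  have hkernel_abs : IntervalIntegrable (fun x => |x - (a + b) / 2| * C) volume a b :=
    (hkernel.abs.mul continuous_const).intervalIntegrable a b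
  have hweighted : |∫ x in a..b, (x - (a + b) / 2) * f' x| ≤ (b - a) ^ 2 / 4 * C :=
    calc |∫ x in a..b, (x - (a + b) / 2) * f' x|
        ≤ ∫ x in a..b, |(x - (a + b) / 2) * f' x| := abs_integral_le_integral_abs hab.le
      _ ≤ ∫ x in a..b, |x - (a + b) / 2| * C := by
          refine integral_mono_on hab.le (hint.continuousOn_mul hkernel.continuousOn).abs
            hkernel_abs fun x hx => ?_
          rw [abs_mul]
          exact mul_le_mul_of_nonneg_left (hbound x hx) (abs_nonneg _)
      _ = (b - a) ^ 2 / 4 * C := by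
          rw [intervalIntegral.integral_mul_const, integral_abs_sub_midpoint hab.le]
  rw [trapezoid_error_eq_integral_mul_deriv hab hderiv hint, abs_mul,
    abs_of_pos (one_div_pos.2 hba)]
  calc 1 / (b - a) * |∫ x in a..b, (x - (a + b) / 2) * f' x|
      ≤ 1 / (b - a) * ((b - a) ^ 2 / 4 * C) := by gcongr
    _ = (b - a) / 4 * C := by field_simp

theorem stmt19 (I : Set ℝ) (hI : Set.OrdConnected I)
    (f f' : ℝ → ℝ) (a b : ℝ) (ha : a ∈ I) (hb : b ∈ I) (hab : a < b)
    (p : ℝ) (hp : 1 < p)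
    (hderiv : ∀ x ∈ I, HasDerivAt f (f' x) x)
    (hqc : QuasiConvexOn' (Set.Icc a b) (fun x => |f' x| ^ (p/(p-1)))) :
    |(f a + f b)/2 - (1/(b-a)) * ∫ u in a..b, f u|
      ≤ (b-a)/(2*(p+1)^(1/p)) * (max (|f' a| ^ (p/(p-1))) (|f' b| ^ (p/(p-1)))) ^ ((p-1)/p) := by
  set C := (max (|f' a| ^ (p/(p-1))) (|f' b| ^ (p/(p-1)))) ^ ((p-1)/p)
  have hbound : ∀ u ∈ Icc a b, |f' u| ≤ C := fun u hu => by
    rw [← rpow_div_sub_one_rpow_sub_one_div hp (abs_nonneg (f' u))]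
    exact rpow_le_rpow (by positivity) (hqc.le_max_of_mem_Icc hu)
      (div_nonneg (by linarith) (by linarith))
  have hC : 0 ≤ C := (abs_nonneg _).trans (hbound a (left_mem_Icc.2 hab.le))
  calc _ ≤ (b - a) / 4 * C :=
        abs_trapezoid_error_le hab (fun x hx => hderiv x (hI.out ha hb hx)) hbound
    _ ≤ (b - a) / (2 * (p + 1) ^ (1 / p)) * C := by
        have := rpow_one_div_add_one_le_two hp.le
        gcongr
        linarith
end
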